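/- Let g : ℝⁿ → ℝⁿ be differentiable with lower Lipschitz constant μ > 0 and g(x⋆) = 0, and define H(x) = ½|g(x)|². Let J, R : ℝⁿ → ℝⁿˣⁿ be matrix-valued functions such that J(x) is skew-symmetric and R(x) is symmetric with R(x) ⪰ εI for all x, where ε > 0. If x : [0,∞) → ℝⁿ is a differentiable curve with ẋ(t) = (J(x(t)) − R(x(t)))∇H(x(t)) for all t ≥ 0, then H(x(t)) ≤ e^{−2εμ²t}·H(x(0)) for all t ≥ 0. -/

import Mathlib

/-!
Since `J` is skew, along the flow `d/dt H(x) = ⟪∇H, (J - R) ∇H⟫ = -⟪∇H, R ∇H⟫ ≤ -ε |∇H|²`.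
The gradient is `∇H(x) = Dg(x)* g(x)`, and the lower Lipschitz bound makes `Dg(x)` bounded below
by `μ`; a square matrix bounded below is invertible, and then its adjoint is bounded below by `μ`
as well. Hence `|∇H| ≥ μ |g|`, so `d/dt H(x) ≤ -2εμ² H(x)`, and Grönwall's argument
(`e^{2εμ²t} H(x(t))` is antitone) gives the decay.
-/

open scoped RealInnerProductSpace

open Filter Topology ContinuousLinearMap

section LowerLipschitz

variable {E F : Type*} [NormedAddCommGroup E] [NormedSpace ℝ E] [NormedAddCommGroup F]
  [NormedSpace ℝ F]

theorem HasFDerivAt.mul_norm_le_norm_apply_of_lowerLipschitz {f : E → F} {f' : E →L[ℝ] F}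
    {p : E} {μ : ℝ} (hf : HasFDerivAt f f' p) (hlow : ∀ x x', μ * ‖x - x'‖ ≤ ‖f x - f x'‖)
    (v : E) : μ * ‖v‖ ≤ ‖f' v‖ := by
  have hlim : Tendsto (fun k : ℕ => ‖(k : ℝ) • (f (p + (k : ℝ)⁻¹ • v) - f p)‖) atTop
      (𝓝 ‖f' v‖) :=
    (hf.lim v (c := fun k : ℕ => (k : ℝ)) (by simpa using tendsto_natCast_atTop_atTop)).norm
  refine ge_of_tendsto hlim ((eventually_gt_atTop 0).mono fun k hk => ?_)
  have hk : (0 : ℝ) < k := by exact_mod_cast hk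
  calc μ * ‖v‖ = k * (μ * ‖p + (k : ℝ)⁻¹ • v - p‖) := by
        rw [add_sub_cancel_left, norm_smul, norm_inv, Real.norm_of_nonneg hk.le]
        field_simp
    _ ≤ k * ‖f (p + (k : ℝ)⁻¹ • v) - f p‖ := by gcongr; exact hlow _ _
    _ = _ := by rw [norm_smul, Real.norm_of_nonneg hk.le]

end LowerLipschitz

section InnerProduct

variable {E F : Type*} [NormedAddCommGroup E] [InnerProductSpace ℝ E] [NormedAddCommGroup F]
  [InnerProductSpace ℝ F]

theorem ContinuousLinearMap.mul_norm_le_norm_adjoint_apply [FiniteDimensional ℝ E]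
    {A : E →L[ℝ] E} {μ : ℝ} (hμ : 0 < μ) (hA : ∀ v, μ * ‖v‖ ≤ ‖A v‖) (y : E) :
    μ * ‖y‖ ≤ ‖A.adjoint y‖ := by
  have hinj : Function.Injective (A : E →ₗ[ℝ] E) := by
    refine (injective_iff_map_eq_zero _).2 fun v hv => norm_le_zero_iff.1 ?_
    have := hA v
    rw [coe_coe] at hv
    rw [hv, norm_zero] at this
    exact nonpos_of_mul_nonpos_right this hμ
  obtain ⟨v, rfl⟩ := LinearMap.injective_iff_surjective.1 hinj y
  rw [coe_coe]
  rcases (norm_nonneg (A v)).eq_or_lt with h0 | hpos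
  · rw [← h0, mul_zero]; exact norm_nonneg _
  have hsq : ‖A v‖ ^ 2 ≤ ‖A.adjoint (A v)‖ * ‖v‖ := by
    rw [← real_inner_self_eq_norm_sq, ← adjoint_inner_left]
    exact real_inner_le_norm _ _
  refine le_of_mul_le_mul_right ?_ hpos
  nlinarith [hA v, norm_nonneg (A.adjoint (A v))]

theorem HasFDerivAt.hasGradientAt_half_norm_sq [CompleteSpace E] [CompleteSpace F] {g : E → F}
    {A : E →L[ℝ] F} {p : E} (hg : HasFDerivAt g A p) :
    HasGradientAt (fun x => 1 / 2 * ‖g x‖ ^ 2) (A.adjoint (g p)) p := by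
  rw [hasGradientAt_iff_hasFDerivAt]
  refine (hg.norm_sq.const_mul (1 / 2)).congr_fderiv ?_
  ext v
  simp [adjoint_inner_left]

theorem real_inner_sub_apply_self_le {J R : E →ₗ[ℝ] E} {ε : ℝ}
    (hJ : ∀ v w, ⟪J v, w⟫ = -⟪v, J w⟫) (hR : ∀ v, ε * ‖v‖ ^ 2 ≤ ⟪v, R v⟫) (v : E) :
    ⟪v, (J - R) v⟫ ≤ -(ε * ‖v‖ ^ 2) := by
  have hskew : ⟪v, J v⟫ = 0 := by linarith [hJ v v, real_inner_comm v (J v)]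
  rw [LinearMap.sub_apply, inner_sub_right, hskew, zero_sub, neg_le_neg_iff]
  exact hR v

end InnerProduct

theorem le_exp_mul_of_hasDerivAt_le_mul {φ φ' : ℝ → ℝ} {c : ℝ}
    (hφ : ∀ t, 0 ≤ t → HasDerivAt φ (φ' t) t) (hbound : ∀ t, 0 ≤ t → φ' t ≤ c * φ t)
    {t : ℝ} (ht : 0 ≤ t) : φ t ≤ Real.exp (c * t) * φ 0 := by
  set ψ' := fun s => Real.exp (-c * s) * (-c) * φ s + Real.exp (-c * s) * φ' s
  have hderiv : ∀ s, 0 ≤ s → HasDerivAt (fun s => Real.exp (-c * s) * φ s) (ψ' s) s :=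
    fun s hs => (((hasDerivAt_id' s).const_mul (-c)).exp.fun_mul (hφ s hs)).congr_deriv (by ring)
  have hanti : AntitoneOn (fun s => Real.exp (-c * s) * φ s) (Set.Ici 0) := by
    refine antitoneOn_of_hasDerivWithinAt_nonpos (convex_Ici 0) (f' := ψ')
      (fun s hs => (hderiv s hs).continuousAt.continuousWithinAt) (fun s hs => ?_) fun s hs => ?_
    · rw [interior_Ici] at hs ⊢
      exact (hderiv s hs.le).hasDerivWithinAt
    · rw [interior_Ici] at hs
      have := hbound s hs.le
      nlinarith [Real.exp_pos (-c * s)]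
  have hdecay : Real.exp (-c * t) * φ t ≤ φ 0 := by
    simpa using hanti Set.self_mem_Ici ht ht
  calc φ t = Real.exp (c * t) * (Real.exp (-c * t) * φ t) := by
        rw [← mul_assoc, ← Real.exp_add, neg_mul, add_neg_cancel, Real.exp_zero, one_mul]
    _ ≤ Real.exp (c * t) * φ 0 := by gcongr

theorem hamiltonian_exponential_decay_general
    {n : ℕ} (μ : ℝ) (hμ : 0 < μ)
    (g : EuclideanSpace ℝ (Fin n) → EuclideanSpace ℝ (Fin n))
    (hg : Differentiable ℝ g)
    (hlow : ∀ x x' : EuclideanSpace ℝ (Fin n), μ * ‖x - x'‖ ≤ ‖g x - g x'‖)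
    (H : EuclideanSpace ℝ (Fin n) → ℝ)
    (hH : H = fun x => (1 / 2 : ℝ) * ‖g x‖ ^ 2)
    (J R : EuclideanSpace ℝ (Fin n) →
      (EuclideanSpace ℝ (Fin n) →ₗ[ℝ] EuclideanSpace ℝ (Fin n)))
    (hJskew : ∀ x v w, ⟪J x v, w⟫ = -⟪v, J x w⟫)
    (ε : ℝ) (hε : 0 < ε)
    (hRlb : ∀ x v, ε * ‖v‖ ^ 2 ≤ ⟪v, R x v⟫)
    (x : ℝ → EuclideanSpace ℝ (Fin n))
    (hx : ∀ t : ℝ, 0 ≤ t →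
      HasDerivAt x ((J (x t) - R (x t)) (gradient H (x t))) t) :
    ∀ t : ℝ, 0 ≤ t →
      H (x t) ≤ Real.exp (-2 * ε * μ ^ 2 * t) * H (x 0) := by
  have hgradH : ∀ p, HasGradientAt H ((fderiv ℝ g p).adjoint (g p)) p := fun p =>
    hH ▸ (hg p).hasFDerivAt.hasGradientAt_half_norm_sq
  have hgrad_lb : ∀ p, μ * ‖g p‖ ≤ ‖gradient H p‖ := fun p => by
    rw [(hgradH p).gradient]
    exact mul_norm_le_norm_adjoint_apply hμ
      ((hg p).hasFDerivAt.mul_norm_le_norm_apply_of_lowerLipschitz hlow) _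
  intro t ht
  refine le_exp_mul_of_hasDerivAt_le_mul (φ := fun s => H (x s))
    (φ' := fun s => ⟪gradient H (x s), (J (x s) - R (x s)) (gradient H (x s))⟫)
    (fun s hs => ?_) (fun s hs => ?_) ht
  · have hHx := (hgradH (x s)).differentiableAt.hasGradientAt
    have := hHx.hasFDerivAt.comp_hasDerivAt s (hx s hs)
    rwa [InnerProductSpace.toDual_apply_apply] at this
  · calc _ ≤ -(ε * ‖gradient H (x s)‖ ^ 2) := real_inner_sub_apply_self_le (hJskew _) (hRlb _) _
      _ ≤ -(ε * (μ * ‖g (x s)‖) ^ 2) := by gcongr; exact hgrad_lb _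
      _ = -2 * ε * μ ^ 2 * H (x s) := by rw [hH]; ring

/-- Exponential decay of the Hamiltonian `H(x) = ½|g(x)|²` (with `g`
differentiable, lower Lipschitz with constant `μ > 0`, `g(x⋆) = 0`) along
trajectories of `ẋ = (J(x) − R(x))∇H(x)` when `R(x) ⪰ εI`:
`H(x(t)) ≤ e^{−2εμ²t}·H(x(0))` for all `t ≥ 0`. -/
theorem hamiltonian_exponential_decay
    {n : ℕ} (μ : ℝ) (hμ : 0 < μ)
    (g : EuclideanSpace ℝ (Fin n) → EuclideanSpace ℝ (Fin n))
    (hg : Differentiable ℝ g)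
    (hlow : ∀ x x' : EuclideanSpace ℝ (Fin n), μ * ‖x - x'‖ ≤ ‖g x - g x'‖)
    (xs : EuclideanSpace ℝ (Fin n)) (hxs : g xs = 0)
    (H : EuclideanSpace ℝ (Fin n) → ℝ)
    (hH : H = fun x => (1 / 2 : ℝ) * ‖g x‖ ^ 2)
    (J R : EuclideanSpace ℝ (Fin n) →
      (EuclideanSpace ℝ (Fin n) →ₗ[ℝ] EuclideanSpace ℝ (Fin n)))
    (hJskew : ∀ x v w, ⟪J x v, w⟫ = -⟪v, J x w⟫)
    (hRsymm : ∀ x v w, ⟪R x v, w⟫ = ⟪v, R x w⟫)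
    (ε : ℝ) (hε : 0 < ε)
    (hRlb : ∀ x v, ε * ‖v‖ ^ 2 ≤ ⟪v, R x v⟫)
    (x : ℝ → EuclideanSpace ℝ (Fin n))
    (hx : ∀ t : ℝ, 0 ≤ t →
      HasDerivAt x ((J (x t) - R (x t)) (gradient H (x t))) t) :
    ∀ t : ℝ, 0 ≤ t →
      H (x t) ≤ Real.exp (-2 * ε * μ ^ 2 * t) * H (x 0) :=
  hamiltonian_exponential_decay_general μ hμ g hg hlow H hH J R hJskew ε hε hRlb x hx
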